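/- arXiv:2009.07383 — 3 statements merged into one kernel-verified Lean document; each statement's English description precedes it below -/
import Mathlib

section
/- Let X, U¹ : ℝ² → ℝ be smooth functions of (x,p) with X_p ≠ 0, let Y, U² : ℝ² → ℝ be smooth functions of (y,q) with Y_q ≠ 0, let c ≠ 0, and suppose U¹_p = Uˣ·X_p, c·p + U¹_x = Uˣ·X_x, U²_q = Uʸ·Y_q, c·q + U²_y = Uʸ·Y_y for smooth functions Uˣ(x,p), Uʸ(y,q). If a smooth function u(x,y) satisfies u_xy = 0 and the map (x,y) ↦ (X(x,u_x(x,y)), Y(y,u_y(x,y))) is a diffeomorphism onto its image, then the function ũ defined on the image by ũ(X(x,u_x), Y(y,u_y)) = c·u + U¹(x,u_x) + U²(y,u_y) also satisfies ũ_x̃ỹ = 0, with ũ_x̃ = Uˣ(x,u_x) and ũ_ỹ = Uʸ(y,u_y). -/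
open ContinuousLinearMap

lemma pd1 {F : ℝ × ℝ → ℝ} (hF : Differentiable ℝ F) (x y : ℝ) :
    HasDerivAt (fun x' => F (x', y)) (fderiv ℝ F (x, y) (1, 0)) x := by
  have h1 : HasDerivAt (fun x' : ℝ => (x', y)) ((1:ℝ), (0:ℝ)) x :=
    (hasDerivAt_id x).prodMk (hasDerivAt_const x y)
  exact (hF (x, y)).hasFDerivAt.comp_hasDerivAt x h1

lemma pd2 {F : ℝ × ℝ → ℝ} (hF : Differentiable ℝ F) (x y : ℝ) :
    HasDerivAt (fun y' => F (x, y')) (fderiv ℝ F (x, y) (0, 1)) y := by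
  have h1 : HasDerivAt (fun y' : ℝ => (x, y')) ((0:ℝ), (1:ℝ)) y :=
    (hasDerivAt_const y x).prodMk (hasDerivAt_id y)
  exact (hF (x, y)).hasFDerivAt.comp_hasDerivAt y h1

lemma fderiv_apply_smooth {F : ℝ × ℝ → ℝ} (hF : ContDiff ℝ (⊤ : ℕ∞) F) (v : ℝ × ℝ) :
    ContDiff ℝ (⊤ : ℕ∞) (fun z => fderiv ℝ F z v) :=
  (ContinuousLinearMap.apply ℝ ℝ v).contDiff.comp (hF.fderiv_right (by simp))

lemma comp2 {G : ℝ × ℝ → ℝ} (hG : Differentiable ℝ G) {f g : ℝ → ℝ} {f' g' t : ℝ}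
    (hf : HasDerivAt f f' t) (hg : HasDerivAt g g' t) :
    HasDerivAt (fun s => G (f s, g s)) (fderiv ℝ G (f t, g t) (f', g')) t :=
  (hG (f t, g t)).hasFDerivAt.comp_hasDerivAt t (hf.prodMk hg)

lemma clm_split (L : ℝ × ℝ →L[ℝ] ℝ) (a b : ℝ) : L (a, b) = a * L (1, 0) + b * L (0, 1) := by
  have h : (a, b) = a • ((1:ℝ), (0:ℝ)) + b • ((0:ℝ), (1:ℝ)) := by
    simp [Prod.ext_iff]
  rw [h, map_add, map_smul, map_smul, smul_eq_mul, smul_eq_mul]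

lemma fderiv_fderiv_apply {F : ℝ × ℝ → ℝ} (hF : ContDiff ℝ (⊤ : ℕ∞) F) (z v w : ℝ × ℝ) :
    fderiv ℝ (fun z' => fderiv ℝ F z' v) z w = fderiv ℝ (fderiv ℝ F) z w v := by
  have h1 : HasFDerivAt (fderiv ℝ F) (fderiv ℝ (fderiv ℝ F) z) z :=
    (((hF.fderiv_right (m := (⊤ : ℕ∞)) (by simp)).differentiable (by simp)) z).hasFDerivAt
  have h2 : HasFDerivAt (fun z' => fderiv ℝ F z' v)
      (((ContinuousLinearMap.apply ℝ ℝ v).comp (fderiv ℝ (fderiv ℝ F) z))) z :=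
    (ContinuousLinearMap.apply ℝ ℝ v).hasFDerivAt.comp z h1
  rw [h2.fderiv]; rfl

lemma mixed_symm {F : ℝ × ℝ → ℝ} (hF : ContDiff ℝ (⊤ : ℕ∞) F) (x y : ℝ) :
    deriv (fun x' => fderiv ℝ F (x', y) (0, 1)) x
      = deriv (fun y' => fderiv ℝ F (x, y') (1, 0)) y := by
  have hFd : Differentiable ℝ F := hF.differentiable (by simp)
  have hQ : Differentiable ℝ (fun z => fderiv ℝ F z (0, 1)) :=
    (fderiv_apply_smooth hF _).differentiable (by simp)
  have hP : Differentiable ℝ (fun z => fderiv ℝ F z (1, 0)) :=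
    (fderiv_apply_smooth hF _).differentiable (by simp)
  have h1 := (pd1 hQ x y).deriv
  have h2 := (pd2 hP x y).deriv
  rw [h1, h2, fderiv_fderiv_apply hF, fderiv_fderiv_apply hF]
  exact second_derivative_symmetric (fun z => (hFd z).hasFDerivAt)
    (((hF.fderiv_right (m := (⊤ : ℕ∞)) (by simp)).differentiable (by simp) (x, y)).hasFDerivAt) _ _

noncomputable def P1 (f : ℝ → ℝ → ℝ) : ℝ → ℝ → ℝ :=
  fun a b => fderiv ℝ (fun z : ℝ × ℝ => f z.1 z.2) (a, b) (1, 0)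

noncomputable def P2 (f : ℝ → ℝ → ℝ) : ℝ → ℝ → ℝ :=
  fun a b => fderiv ℝ (fun z : ℝ × ℝ => f z.1 z.2) (a, b) (0, 1)

lemma deriv_P1 {f : ℝ → ℝ → ℝ} (hf : Differentiable ℝ (fun z : ℝ × ℝ => f z.1 z.2))
    (a b : ℝ) : deriv (fun x' => f x' b) a = P1 f a b := (pd1 hf a b).deriv

lemma deriv_P2 {f : ℝ → ℝ → ℝ} (hf : Differentiable ℝ (fun z : ℝ × ℝ => f z.1 z.2))
    (a b : ℝ) : deriv (fun y' => f a y') b = P2 f a b := (pd2 hf a b).deriv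

lemma deriv_P2' {f : ℝ → ℝ → ℝ} (hf : Differentiable ℝ (fun z : ℝ × ℝ => f z.1 z.2))
    (a b : ℝ) : deriv (f a) b = P2 f a b := (pd2 hf a b).deriv

lemma P1_smooth {f : ℝ → ℝ → ℝ} (hf : ContDiff ℝ (⊤ : ℕ∞) (fun z : ℝ × ℝ => f z.1 z.2)) :
    ContDiff ℝ (⊤ : ℕ∞) (fun z : ℝ × ℝ => P1 f z.1 z.2) := fderiv_apply_smooth hf (1, 0)

lemma P2_smooth {f : ℝ → ℝ → ℝ} (hf : ContDiff ℝ (⊤ : ℕ∞) (fun z : ℝ × ℝ => f z.1 z.2)) :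
    ContDiff ℝ (⊤ : ℕ∞) (fun z : ℝ × ℝ => P2 f z.1 z.2) := fderiv_apply_smooth hf (0, 1)

lemma diff_fst {f : ℝ → ℝ → ℝ} (hf : ContDiff ℝ (⊤ : ℕ∞) (fun z : ℝ × ℝ => f z.1 z.2)) (b : ℝ) :
    Differentiable ℝ (fun a => f a b) :=
  fun a => (pd1 (hf.differentiable (by simp)) a b).differentiableAt

lemma diff_snd {f : ℝ → ℝ → ℝ} (hf : ContDiff ℝ (⊤ : ℕ∞) (fun z : ℝ × ℝ => f z.1 z.2)) (a : ℝ) :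
    Differentiable ℝ (fun b => f a b) :=
  fun b => (pd2 (hf.differentiable (by simp)) a b).differentiableAt

lemma hasDerivAt_comp2 {g : ℝ → ℝ → ℝ} (hg : ContDiff ℝ (⊤ : ℕ∞) (fun z : ℝ × ℝ => g z.1 z.2))
    {f1 f2 : ℝ → ℝ} {d1 d2 t : ℝ} (h1 : HasDerivAt f1 d1 t) (h2 : HasDerivAt f2 d2 t) :
    HasDerivAt (fun s => g (f1 s) (f2 s))
      (d1 * P1 g (f1 t) (f2 t) + d2 * P2 g (f1 t) (f2 t)) t := by
  have h := comp2 (hg.differentiable (by simp)) h1 h2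
  rw [clm_split] at h
  exact h

lemma mixed_symm' {g : ℝ → ℝ → ℝ} (hg : ContDiff ℝ (⊤ : ℕ∞) (fun z : ℝ × ℝ => g z.1 z.2)) (a b : ℝ) :
    deriv (fun a' => P2 g a' b) a = deriv (fun b' => P1 g a b') b := mixed_symm hg a b

/-- the family of contact transformations
x̃ = X(x,u_x), ỹ = Y(y,u_y), ũ = c·u + U¹(x,u_x) + U²(y,u_y), ũ_x̃ = Uˣ, ũ_ỹ = Uʸ
subject to the determining equations consists of contact symmetries of the wave
equation u_xy = 0. -/
theorem stmt_5
    (X U1 Ux : ℝ → ℝ → ℝ) (Y U2 Uy : ℝ → ℝ → ℝ) (c : ℝ) (hc : c ≠ 0)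
    (hX : ContDiff ℝ (⊤ : ℕ∞) (fun z : ℝ × ℝ => X z.1 z.2))
    (hU1 : ContDiff ℝ (⊤ : ℕ∞) (fun z : ℝ × ℝ => U1 z.1 z.2))
    (hUx : ContDiff ℝ (⊤ : ℕ∞) (fun z : ℝ × ℝ => Ux z.1 z.2))
    (hY : ContDiff ℝ (⊤ : ℕ∞) (fun z : ℝ × ℝ => Y z.1 z.2))
    (hU2 : ContDiff ℝ (⊤ : ℕ∞) (fun z : ℝ × ℝ => U2 z.1 z.2))
    (hUy : ContDiff ℝ (⊤ : ℕ∞) (fun z : ℝ × ℝ => Uy z.1 z.2))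
    (hXp : ∀ x p, deriv (X x) p ≠ 0) (hYq : ∀ y q, deriv (Y y) q ≠ 0)
    -- determining equations of the contact symmetries of the wave equation
    (hdet1 : ∀ x p, deriv (U1 x) p = Ux x p * deriv (X x) p)
    (hdet2 : ∀ x p, c * p + deriv (fun x' => U1 x' p) x = Ux x p * deriv (fun x' => X x' p) x)
    (hdet3 : ∀ y q, deriv (U2 y) q = Uy y q * deriv (Y y) q)
    (hdet4 : ∀ y q, c * q + deriv (fun y' => U2 y' q) y = Uy y q * deriv (fun y' => Y y' q) y)
    -- a smooth solution of the wave equation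
    (u : ℝ → ℝ → ℝ) (hu : ContDiff ℝ (⊤ : ℕ∞) (fun z : ℝ × ℝ => u z.1 z.2))
    (hwave : ∀ x y, deriv (fun y' => deriv (fun x' => u x' y') x) y = 0)
    -- (x,y) ↦ (X(x,u_x), Y(y,u_y)) is a diffeomorphism onto its image:
    -- it has a smooth global left inverse (ξ,η)
    (ξ η : ℝ × ℝ → ℝ)
    (hξ : ContDiff ℝ (⊤ : ℕ∞) ξ) (hη : ContDiff ℝ (⊤ : ℕ∞) η)
    (hleft : ∀ x y,
      ξ (X x (deriv (fun x' => u x' y) x), Y y (deriv (fun y' => u x y') y)) = x ∧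
      η (X x (deriv (fun x' => u x' y) x), Y y (deriv (fun y' => u x y') y)) = y)
    -- the transformed function ũ, defined on the image by the transformation formula
    (ut : ℝ → ℝ → ℝ) (hut : ContDiff ℝ (⊤ : ℕ∞) (fun z : ℝ × ℝ => ut z.1 z.2))
    (hdef : ∀ x y,
      ut (X x (deriv (fun x' => u x' y) x)) (Y y (deriv (fun y' => u x y') y))
        = c * u x y + U1 x (deriv (fun x' => u x' y) x) + U2 y (deriv (fun y' => u x y') y)) :
    ∀ x y,
      deriv (fun b => deriv (fun a => ut a b) (X x (deriv (fun x' => u x' y) x)))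
          (Y y (deriv (fun y' => u x y') y)) = 0 ∧
      deriv (fun a => ut a (Y y (deriv (fun y' => u x y') y))) (X x (deriv (fun x' => u x' y) x))
        = Ux x (deriv (fun x' => u x' y) x) ∧
      deriv (fun b => ut (X x (deriv (fun x' => u x' y) x)) b) (Y y (deriv (fun y' => u x y') y))
        = Uy y (deriv (fun y' => u x y') y) := by
  have hud : Differentiable ℝ (fun z : ℝ × ℝ => u z.1 z.2) := hu.differentiable (by simp)
  have hP1u : ∀ a b, deriv (fun x' => u x' b) a = P1 u a b := deriv_P1 hud
  have hP2u : ∀ a b, deriv (fun y' => u a y') b = P2 u a b := deriv_P2 hud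
  -- u_x depends on x alone
  have hPy : ∀ a b, P1 u a b = P1 u a 0 := by
    intro a b
    have hd : Differentiable ℝ (fun b' => P1 u a b') := diff_snd (P1_smooth hu) a
    have hz : ∀ b', deriv (fun b'' => P1 u a b'') b' = 0 := by
      intro b'
      have he : (fun b'' => P1 u a b'') = fun b'' => deriv (fun x' => u x' b'') a := by
        funext b''; rw [hP1u]
      rw [he]
      exact hwave a b'
    exact is_const_of_deriv_eq_zero hd hz b 0
  -- u_y depends on y alone (Schwarz)
  have hQx : ∀ a b, P2 u a b = P2 u 0 b := by
    intro a b
    have hd : Differentiable ℝ (fun a' => P2 u a' b) := diff_fst (P2_smooth hu) b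
    have hz : ∀ a', deriv (fun a'' => P2 u a'' b) a' = 0 := by
      intro a'
      rw [mixed_symm' hu a' b]
      have he : (fun b' => P1 u a' b') = fun b' => deriv (fun x' => u x' b') a' := by
        funext b'; rw [hP1u]
      rw [he]
      exact hwave a' b
    exact is_const_of_deriv_eq_zero hd hz a 0
  have hux : ∀ a b, deriv (fun x' => u x' b) a = P1 u a 0 := by
    intro a b; rw [hP1u, hPy]
  have huy : ∀ a b, deriv (fun y' => u a y') b = P2 u 0 b := by
    intro a b; rw [hP2u, hQx]
  -- derivatives of p = u_x and q = u_y
  have hp : ∀ a, HasDerivAt (fun a' => P1 u a' 0) (deriv (fun a' => P1 u a' 0) a) a :=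
    fun a => (diff_fst (P1_smooth hu) 0 a).hasDerivAt
  have hq : ∀ b, HasDerivAt (fun b' => P2 u 0 b') (deriv (fun b' => P2 u 0 b') b) b :=
    fun b => (diff_snd (P2_smooth hu) 0 b).hasDerivAt
  -- derivatives of the transformed variables
  have hxt : ∀ a, HasDerivAt (fun a' => X a' (P1 u a' 0))
      (P1 X a (P1 u a 0) + deriv (fun a' => P1 u a' 0) a * P2 X a (P1 u a 0)) a := by
    intro a
    have h := hasDerivAt_comp2 hX (hasDerivAt_id a) (hp a)
    simpa using h
  have hyt : ∀ b, HasDerivAt (fun b' => Y b' (P2 u 0 b'))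
      (P1 Y b (P2 u 0 b) + deriv (fun b' => P2 u 0 b') b * P2 Y b (P2 u 0 b)) b := by
    intro b
    have h := hasDerivAt_comp2 hY (hasDerivAt_id b) (hq b)
    simpa using h
  -- rewritten hypotheses
  have hleft' : ∀ a b, ξ (X a (P1 u a 0), Y b (P2 u 0 b)) = a ∧
      η (X a (P1 u a 0), Y b (P2 u 0 b)) = b := by
    intro a b
    have h := hleft a b
    rwa [hux a b, huy a b] at h
  have hdef' : ∀ a b, ut (X a (P1 u a 0)) (Y b (P2 u 0 b))
      = c * u a b + U1 a (P1 u a 0) + U2 b (P2 u 0 b) := by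
    intro a b
    have h := hdef a b
    rwa [hux a b, huy a b] at h
  -- the derivative of x̃ never vanishes
  have hXd : ∀ a, P1 X a (P1 u a 0) + deriv (fun a' => P1 u a' 0) a * P2 X a (P1 u a 0) ≠ 0 := by
    intro a h0
    have h1 : HasDerivAt (fun a' => ξ (X a' (P1 u a' 0), Y 0 (P2 u 0 0)))
        (fderiv ℝ ξ (X a (P1 u a 0), Y 0 (P2 u 0 0))
          (P1 X a (P1 u a 0) + deriv (fun a' => P1 u a' 0) a * P2 X a (P1 u a 0), 0)) a :=
      (hξ.differentiable (by simp) _).hasFDerivAt.comp_hasDerivAt a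
        ((hxt a).prodMk (hasDerivAt_const a _))
    have h2 : (fun a' => ξ (X a' (P1 u a' 0), Y 0 (P2 u 0 0))) = fun a' => a' :=
      funext fun a' => (hleft' a' 0).1
    rw [h2] at h1
    have h3 := h1.unique (hasDerivAt_id a)
    rw [h0, show ((0:ℝ), (0:ℝ)) = (0 : ℝ × ℝ) from rfl, map_zero] at h3
    exact one_ne_zero h3.symm
  -- the derivative of ỹ never vanishes
  have hYd : ∀ b, P1 Y b (P2 u 0 b) + deriv (fun b' => P2 u 0 b') b * P2 Y b (P2 u 0 b) ≠ 0 := by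
    intro b h0
    have h1 : HasDerivAt (fun b' => η (X 0 (P1 u 0 0), Y b' (P2 u 0 b')))
        (fderiv ℝ η (X 0 (P1 u 0 0), Y b (P2 u 0 b))
          ((0:ℝ), P1 Y b (P2 u 0 b) + deriv (fun b' => P2 u 0 b') b * P2 Y b (P2 u 0 b))) b :=
      (hη.differentiable (by simp) _).hasFDerivAt.comp_hasDerivAt b
        ((hasDerivAt_const b _).prodMk (hyt b))
    have h2 : (fun b' => η (X 0 (P1 u 0 0), Y b' (P2 u 0 b'))) = fun b' => b' :=
      funext fun b' => (hleft' 0 b').2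
    rw [h2] at h1
    have h3 := h1.unique (hasDerivAt_id b)
    rw [h0, show ((0:ℝ), (0:ℝ)) = (0 : ℝ × ℝ) from rfl, map_zero] at h3
    exact one_ne_zero h3.symm
  -- first transformed derivative
  have hPt : ∀ a b, P1 ut (X a (P1 u a 0)) (Y b (P2 u 0 b)) = Ux a (P1 u a 0) := by
    intro a b
    have hL : HasDerivAt (fun a' => ut (X a' (P1 u a' 0)) (Y b (P2 u 0 b)))
        ((P1 X a (P1 u a 0) + deriv (fun a' => P1 u a' 0) a * P2 X a (P1 u a 0))
          * P1 ut (X a (P1 u a 0)) (Y b (P2 u 0 b))) a := by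
      have h := hasDerivAt_comp2 hut (hxt a) (hasDerivAt_const a (Y b (P2 u 0 b)))
      simpa using h
    have hub : HasDerivAt (fun a' => u a' b) (P1 u a 0) a := by
      have h : HasDerivAt (fun a' => u a' b) (P1 u a b) a := pd1 hud a b
      rwa [hPy a b] at h
    have hU1d : HasDerivAt (fun a' => U1 a' (P1 u a' 0))
        (P1 U1 a (P1 u a 0) + deriv (fun a' => P1 u a' 0) a * P2 U1 a (P1 u a 0)) a := by
      have h := hasDerivAt_comp2 hU1 (hasDerivAt_id a) (hp a)
      simpa using h
    have hR : HasDerivAt (fun a' => c * u a' b + U1 a' (P1 u a' 0) + U2 b (P2 u 0 b))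
        (c * P1 u a 0 + (P1 U1 a (P1 u a 0)
          + deriv (fun a' => P1 u a' 0) a * P2 U1 a (P1 u a 0))) a :=
      ((hub.const_mul c).add hU1d).add_const _
    have hfun : (fun a' => ut (X a' (P1 u a' 0)) (Y b (P2 u 0 b)))
        = fun a' => c * u a' b + U1 a' (P1 u a' 0) + U2 b (P2 u 0 b) :=
      funext fun a' => hdef' a' b
    rw [hfun] at hL
    have hkey := hL.unique hR
    have e1 : P2 U1 a (P1 u a 0) = Ux a (P1 u a 0) * P2 X a (P1 u a 0) := by
      have h := hdet1 a (P1 u a 0)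
      rwa [deriv_P2' (hU1.differentiable (by simp)), deriv_P2' (hX.differentiable (by simp))] at h
    have e2 : c * (P1 u a 0) + P1 U1 a (P1 u a 0) = Ux a (P1 u a 0) * P1 X a (P1 u a 0) := by
      have h := hdet2 a (P1 u a 0)
      rwa [deriv_P1 (hU1.differentiable (by simp)), deriv_P1 (hX.differentiable (by simp))] at h
    refine mul_left_cancel₀ (hXd a) ?_
    linear_combination hkey + e2 + deriv (fun a' => P1 u a' 0) a * e1
  -- second transformed derivative
  have hQt : ∀ a b, P2 ut (X a (P1 u a 0)) (Y b (P2 u 0 b)) = Uy b (P2 u 0 b) := by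
    intro a b
    have hL : HasDerivAt (fun b' => ut (X a (P1 u a 0)) (Y b' (P2 u 0 b')))
        ((P1 Y b (P2 u 0 b) + deriv (fun b' => P2 u 0 b') b * P2 Y b (P2 u 0 b))
          * P2 ut (X a (P1 u a 0)) (Y b (P2 u 0 b))) b := by
      have h := hasDerivAt_comp2 hut (hasDerivAt_const b (X a (P1 u a 0))) (hyt b)
      simpa using h
    have hub : HasDerivAt (fun b' => u a b') (P2 u 0 b) b := by
      have h : HasDerivAt (fun b' => u a b') (P2 u a b) b := pd2 hud a b
      rwa [hQx a b] at h
    have hU2d : HasDerivAt (fun b' => U2 b' (P2 u 0 b'))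
        (P1 U2 b (P2 u 0 b) + deriv (fun b' => P2 u 0 b') b * P2 U2 b (P2 u 0 b)) b := by
      have h := hasDerivAt_comp2 hU2 (hasDerivAt_id b) (hq b)
      simpa using h
    have hR : HasDerivAt (fun b' => c * u a b' + U1 a (P1 u a 0) + U2 b' (P2 u 0 b'))
        (c * P2 u 0 b + (P1 U2 b (P2 u 0 b)
          + deriv (fun b' => P2 u 0 b') b * P2 U2 b (P2 u 0 b))) b := by
      have h := (((hub.const_mul c).add_const (U1 a (P1 u a 0))).add hU2d)
      exact h
    have hfun : (fun b' => ut (X a (P1 u a 0)) (Y b' (P2 u 0 b')))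
        = fun b' => c * u a b' + U1 a (P1 u a 0) + U2 b' (P2 u 0 b') :=
      funext fun b' => hdef' a b'
    rw [hfun] at hL
    have hkey := hL.unique hR
    have e3 : P2 U2 b (P2 u 0 b) = Uy b (P2 u 0 b) * P2 Y b (P2 u 0 b) := by
      have h := hdet3 b (P2 u 0 b)
      rwa [deriv_P2' (hU2.differentiable (by simp)), deriv_P2' (hY.differentiable (by simp))] at h
    have e4 : c * (P2 u 0 b) + P1 U2 b (P2 u 0 b) = Uy b (P2 u 0 b) * P1 Y b (P2 u 0 b) := by
      have h := hdet4 b (P2 u 0 b)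
      rwa [deriv_P1 (hU2.differentiable (by simp)), deriv_P1 (hY.differentiable (by simp))] at h
    refine mul_left_cancel₀ (hYd b) ?_
    linear_combination hkey + e4 + deriv (fun b' => P2 u 0 b') b * e3
  -- conclusion
  intro x y
  rw [hux x y, huy x y]
  refine ⟨?_, ?_, ?_⟩
  · have hre : (fun b => deriv (fun a => ut a b) (X x (P1 u x 0)))
        = fun b => P1 ut (X x (P1 u x 0)) b := by
      funext b; exact deriv_P1 (hut.differentiable (by simp)) _ b
    rw [hre]
    have hout : HasDerivAt (fun b => P1 ut (X x (P1 u x 0)) b)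
        (deriv (fun b => P1 ut (X x (P1 u x 0)) b) (Y y (P2 u 0 y))) (Y y (P2 u 0 y)) :=
      (diff_snd (P1_smooth hut) _ _).hasDerivAt
    have hcomp' : HasDerivAt (fun b' => P1 ut (X x (P1 u x 0)) (Y b' (P2 u 0 b')))
        (deriv (fun b => P1 ut (X x (P1 u x 0)) b) (Y y (P2 u 0 y)) *
          (P1 Y y (P2 u 0 y) + deriv (fun b' => P2 u 0 b') y * P2 Y y (P2 u 0 y))) y :=
      by have := hout.comp y (hyt y); exact this
    have hconst : (fun b' => P1 ut (X x (P1 u x 0)) (Y b' (P2 u 0 b')))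
        = fun _ => Ux x (P1 u x 0) := funext fun b' => hPt x b'
    rw [hconst] at hcomp'
    have h0 := hcomp'.unique (hasDerivAt_const y _)
    exact (mul_eq_zero.mp h0).resolve_right (hYd y)
  · exact (deriv_P1 (hut.differentiable (by simp)) _ _).trans (hPt x y)
  · exact (deriv_P2 (hut.differentiable (by simp)) _ _).trans (hQt x y)
end

section
/- Let X : ℝ² → ℝ be smooth in (x,p) with X_p(x,p) ≠ 0 for all (x,p), let c ≠ 0, let Θ¹(x, ·) be the inverse of X(x, ·) (so Θ¹(x, X(x,p)) = p for all x,p), and let φ¹ be an arbitrary smooth function of one variable. Define U¹(x,p) := −c·∫_{x₀}^{x} Θ¹(x', X(x,p)) dx' + φ¹(X(x,p)). Then U¹ satisfies the partial differential equation U¹_p·X_x = (c·p + U¹_x)·X_p. -/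
open intervalIntegral Metric Set

/-- Differentiation under the integral sign for a smooth integrand, with
respect to a parameter, over a fixed interval. -/
lemma param_hasDerivAt (f : ℝ → ℝ → ℝ)
    (hf : ContDiff ℝ (⊤ : ℕ∞) (fun z : ℝ × ℝ => f z.1 z.2)) (a b y : ℝ) :
    HasDerivAt (fun s => ∫ t in a..b, f t s)
      (∫ t in a..b, fderiv ℝ (fun z : ℝ × ℝ => f z.1 z.2) (t, y) (0, 1)) y := by
  set Fu : ℝ × ℝ → ℝ := fun z => f z.1 z.2 with hFu
  have hfc : Continuous Fu := hf.continuous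
  have hd : Continuous fun z : ℝ × ℝ => fderiv ℝ Fu z (0, 1) :=
    (hf.continuous_fderiv (by simp)).clm_apply continuous_const
  -- partial derivative in the second variable
  have hpart : ∀ t s : ℝ, HasDerivAt (fun s => f t s) (fderiv ℝ Fu (t, s) (0, 1)) s := by
    intro t s
    have h1 : HasFDerivAt Fu (fderiv ℝ Fu (t, s)) (t, s) :=
      (hf.differentiable (by simp) (t, s)).hasFDerivAt
    have h2 : HasDerivAt (fun s : ℝ => ((t, s) : ℝ × ℝ)) ((0 : ℝ), (1 : ℝ)) s :=
      (hasDerivAt_const s t).prodMk (hasDerivAt_id s)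
    exact h1.comp_hasDerivAt s h2
  -- a bound on the compact set
  have hK : IsCompact (uIcc a b ×ˢ closedBall y 1) :=
    isCompact_uIcc.prod (isCompact_closedBall y 1)
  obtain ⟨C, hC⟩ := hK.exists_bound_of_continuousOn hd.continuousOn
  have key := intervalIntegral.hasDerivAt_integral_of_dominated_loc_of_deriv_le
    (F := fun s t => f t s) (F' := fun s t => fderiv ℝ Fu (t, s) (0, 1))
    (x₀ := y) (a := a) (b := b) (μ := MeasureTheory.volume) (bound := fun _ => C)
    (s := ball y 1) (ball_mem_nhds y one_pos)
    (Filter.Eventually.of_forall fun s =>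
      ((hfc.comp (continuous_id.prodMk continuous_const)).aestronglyMeasurable))
    ((hfc.comp (continuous_id.prodMk continuous_const)).intervalIntegrable a b)
    ((hd.comp (continuous_id.prodMk continuous_const)).aestronglyMeasurable)
    (Filter.Eventually.of_forall fun t ht s hs => by
      have : ((t, s) : ℝ × ℝ) ∈ uIcc a b ×ˢ closedBall y 1 :=
        ⟨uIoc_subset_uIcc ht, ball_subset_closedBall hs⟩
      exact hC (t, s) this)
    (intervalIntegrable_const)
    (Filter.Eventually.of_forall fun t ht s hs => hpart t s)
  exact key.2

/-- for X(x,p) with X_p ≠ 0 and Θ¹ the inverse of X with respect to p,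
the function U¹(x,p) = −c ∫_{x₀}^{x} Θ¹(x',X(x,p)) dx' + φ¹(X(x,p)) satisfies
U¹_p·X_x = (c·p + U¹_x)·X_p. -/
theorem stmt_7
    (X Θ1 : ℝ → ℝ → ℝ) (φ1 : ℝ → ℝ) (c x₀ : ℝ) (hc : c ≠ 0)
    (hX : ContDiff ℝ (⊤ : ℕ∞) (fun z : ℝ × ℝ => X z.1 z.2))
    (hΘ1 : ContDiff ℝ (⊤ : ℕ∞) (fun z : ℝ × ℝ => Θ1 z.1 z.2))
    (hφ1 : ContDiff ℝ (⊤ : ℕ∞) φ1)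
    (hXp : ∀ x p, deriv (X x) p ≠ 0)
    (hinv : ∀ x p, Θ1 x (X x p) = p)
    (U1 : ℝ → ℝ → ℝ)
    (hU1 : ∀ x p, U1 x p = -(c * ∫ t in x₀..x, Θ1 t (X x p)) + φ1 (X x p)) :
    ∀ x p,
      deriv (U1 x) p * deriv (fun x' => X x' p) x
        = (c * p + deriv (fun x' => U1 x' p) x) * deriv (X x) p := by
  intro x p
  have hΘc : Continuous fun z : ℝ × ℝ => Θ1 z.1 z.2 := hΘ1.continuous
  have hXc : Continuous fun z : ℝ × ℝ => X z.1 z.2 := hX.continuous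
  -- the path Y x' = X x' p
  set Y : ℝ → ℝ := fun x' => X x' p with hYdef
  have hYdiff : ∀ x', HasDerivAt Y (deriv Y x') x' := by
    intro x'
    have : DifferentiableAt ℝ Y x' := by
      have : DifferentiableAt ℝ (fun z : ℝ × ℝ => X z.1 z.2) (x', p) :=
        hX.differentiable (by simp) (x', p)
      exact this.comp x' (differentiableAt_id.prodMk (differentiableAt_const p) :
        DifferentiableAt ℝ (fun x : ℝ => (x, p)) x')
    exact this.hasDerivAt
  have hXxdiff : HasDerivAt (X x) (deriv (X x) p) p := by
    have : DifferentiableAt ℝ (X x) p := by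
      have : DifferentiableAt ℝ (fun z : ℝ × ℝ => X z.1 z.2) (x, p) :=
        hX.differentiable (by simp) (x, p)
      exact this.comp p ((differentiableAt_const x).prodMk differentiableAt_id)
    exact this.hasDerivAt
  -- g : the function of y alone
  set g : ℝ → ℝ := fun y => -(c * ∫ t in x₀..x, Θ1 t y) + φ1 y with hgdef
  set m : ℝ := -(c * ∫ t in x₀..x,
      fderiv ℝ (fun z : ℝ × ℝ => Θ1 z.1 z.2) (t, Y x) (0, 1)) + deriv φ1 (Y x) with hmdef
  have hg : HasDerivAt g m (Y x) := by
    have h1 := param_hasDerivAt Θ1 hΘ1 x₀ x (Y x)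
    have h2 : HasDerivAt φ1 (deriv φ1 (Y x)) (Y x) :=
      (hφ1.differentiable (by simp) (Y x)).hasDerivAt
    exact ((h1.const_mul c).neg).add h2
  -- derivative in p
  have hU1p : HasDerivAt (U1 x) (m * deriv (X x) p) p := by
    have hcomp : HasDerivAt (fun p' => g (X x p')) (m * deriv (X x) p) p :=
      hg.comp p hXxdiff
    have : (U1 x) = fun p' => g (X x p') := funext fun p' => by
      rw [hU1 x p']
    rw [this]
    exact hcomp
  -- derivative in x : decomposition
  -- A x' = -(c * ∫_{x₀}^{x'} Θ1 t (Y x))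
  have hAint : ∀ s, Continuous fun t => Θ1 t (Y s) := fun s =>
    hΘc.comp (continuous_id.prodMk continuous_const)
  have hA : HasDerivAt (fun x' => -(c * ∫ t in x₀..x', Θ1 t (Y x))) (-(c * p)) x := by
    have hftc : HasDerivAt (fun x' => ∫ t in x₀..x', Θ1 t (Y x)) (Θ1 x (Y x)) x :=
      intervalIntegral.integral_hasDerivAt_right
        ((hAint x).intervalIntegrable x₀ x)
        ((hAint x).stronglyMeasurableAtFilter _ _)
        (hAint x).continuousAt
    have := (hftc.const_mul c).neg
    rwa [hYdef, hinv x p] at this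
  -- B x' = g (Y x')
  have hB : HasDerivAt (fun x' => g (Y x')) (m * deriv Y x) x := hg.comp x (hYdiff x)
  -- R x' = -(c * ∫_{x}^{x'} (Θ1 t (Y x') - Θ1 t (Y x)))
  have hR : HasDerivAt (fun x' => -(c * ∫ t in x..x', (Θ1 t (Y x') - Θ1 t (Y x)))) 0 x := by
    rw [hasDerivAt_iff_isLittleO]
    simp only [intervalIntegral.integral_same, smul_zero, mul_zero, neg_zero, sub_zero]
    rw [Asymptotics.isLittleO_iff]
    intro ε hε
    set ε' : ℝ := ε / (|c| + 1) with hε'def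
    have hε' : 0 < ε' := div_pos hε (by positivity)
    have hcont : ContinuousAt (fun z : ℝ × ℝ => Θ1 z.1 (Y z.2) - Θ1 z.1 (Y x)) (x, x) := by
      apply ContinuousAt.sub
      · exact (hΘc.comp (continuous_fst.prodMk
          ((hXc.comp (continuous_id.prodMk continuous_const)).comp continuous_snd))).continuousAt
      · exact (hΘc.comp (continuous_fst.prodMk continuous_const)).continuousAt
    have h0 : (fun z : ℝ × ℝ => Θ1 z.1 (Y z.2) - Θ1 z.1 (Y x)) (x, x) = 0 := by simp
    have := Metric.continuousAt_iff.mp hcont ε' hε'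
    obtain ⟨δ, hδpos, hδ⟩ := this
    filter_upwards [Metric.ball_mem_nhds x (half_pos hδpos)] with x' hx'
    have hx'δ : |x' - x| < δ := by
      have := mem_ball_iff_norm.mp hx'
      rw [Real.norm_eq_abs] at this
      linarith [abs_nonneg (x' - x)]
    have hbound : ∀ t ∈ Set.uIoc x x', ‖Θ1 t (Y x') - Θ1 t (Y x)‖ ≤ ε' := by
      intro t ht
      have ht' : t ∈ uIcc x x' := uIoc_subset_uIcc ht
      have htx : |t - x| ≤ |x' - x| := by
        rcases le_total x x' with h | h
        · rw [uIcc_of_le h] at ht'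
          rw [abs_of_nonneg (by linarith [ht'.1]), abs_of_nonneg (by linarith)]
          linarith [ht'.2]
        · rw [uIcc_of_ge h] at ht'
          rw [abs_of_nonpos (by linarith [ht'.2]), abs_of_nonpos (by linarith)]
          linarith [ht'.1]
      have hdist : dist ((t, x') : ℝ × ℝ) (x, x) < δ := by
        rw [Prod.dist_eq]
        apply max_lt
        · rw [Real.dist_eq]; exact lt_of_le_of_lt htx hx'δ
        · rw [Real.dist_eq]; exact hx'δ
      have h2 := hδ hdist
      simp only [Real.dist_eq, sub_self, sub_zero] at h2
      rw [Real.norm_eq_abs]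
      exact le_of_lt h2
    have hibound : ‖∫ t in x..x', (Θ1 t (Y x') - Θ1 t (Y x))‖ ≤ ε' * |x' - x| :=
      intervalIntegral.norm_integral_le_of_norm_le_const hbound
    rw [Real.norm_eq_abs] at hibound
    rw [Real.norm_eq_abs, Real.norm_eq_abs, abs_neg, abs_mul]
    have hce : |c| * ε' ≤ ε := by
      rw [hε'def, mul_div_assoc', div_le_iff₀ (by positivity : (0:ℝ) < |c| + 1)]
      nlinarith [abs_nonneg c, hε.le]
    calc |c| * |∫ t in x..x', (Θ1 t (Y x') - Θ1 t (Y x))|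
        ≤ |c| * (ε' * |x' - x|) := mul_le_mul_of_nonneg_left hibound (abs_nonneg c)
      _ = (|c| * ε') * |x' - x| := by ring
      _ ≤ ε * |x' - x| := mul_le_mul_of_nonneg_right hce (abs_nonneg _)
  -- the decomposition identity
  have hdecomp : (fun x' => U1 x' p) = fun x' =>
      (-(c * ∫ t in x₀..x', Θ1 t (Y x)))
      + g (Y x')
      + (-(c * ∫ t in x..x', (Θ1 t (Y x') - Θ1 t (Y x))))
      + (c * ∫ t in x₀..x, Θ1 t (Y x)) := by
    funext x'
    rw [hU1 x' p]
    have hsplit : (∫ t in x₀..x', Θ1 t (Y x')) =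
        (∫ t in x₀..x, Θ1 t (Y x')) + ∫ t in x..x', Θ1 t (Y x') :=
      (intervalIntegral.integral_add_adjacent_intervals
        ((hAint x').intervalIntegrable x₀ x) ((hAint x').intervalIntegrable x x')).symm
    have hsplit2 : (∫ t in x₀..x', Θ1 t (Y x)) =
        (∫ t in x₀..x, Θ1 t (Y x)) + ∫ t in x..x', Θ1 t (Y x) :=
      (intervalIntegral.integral_add_adjacent_intervals
        ((hAint x).intervalIntegrable x₀ x) ((hAint x).intervalIntegrable x x')).symm
    have hsub : (∫ t in x..x', (Θ1 t (Y x') - Θ1 t (Y x))) =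
        (∫ t in x..x', Θ1 t (Y x')) - ∫ t in x..x', Θ1 t (Y x) :=
      intervalIntegral.integral_sub ((hAint x').intervalIntegrable x x')
        ((hAint x).intervalIntegrable x x')
    rw [hgdef]
    simp only []
    rw [hsub, hsplit, hsplit2]
    ring
  have hU1x : HasDerivAt (fun x' => U1 x' p) (-(c * p) + m * deriv Y x) x := by
    rw [hdecomp]
    have := ((hA.add hB).add hR).add_const (c * ∫ t in x₀..x, Θ1 t (Y x))
    simpa using this
  rw [hU1p.deriv, hU1x.deriv]
  have : deriv (fun x' => X x' p) x = deriv Y x := rfl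
  rw [this]
  ring
end

section
/- Let h : ℝ⁴ → ℝ be a smooth function of (x,y,u,p) with h_p ≠ 0 everywhere, and let u(x,y) be a smooth function such that h(x,y,u,u_x) is independent of y (i.e., its partial derivative in y vanishes identically). Then u satisfies the quasilinear equation u_xy = F⁰(x,y,u,u_x) + F¹(x,y,u,u_x)·u_y, where F⁰ := −h_y/h_p and F¹ := −h_u/h_p, and these coefficients satisfy the compatibility identity F¹_y + F⁰·F¹_p = F⁰_u + F¹·F⁰_p. -/
namespace Stmt9Aux

abbrev E4 := ℝ × ℝ × ℝ × ℝ

lemma mixed_symm {G : E4 → ℝ} (hG : ContDiff ℝ (⊤ : ℕ∞) G) (z v w : E4) :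
    fderiv ℝ (fun q => fderiv ℝ G q v) z w = fderiv ℝ (fun q => fderiv ℝ G q w) z v := by
  have hG1 : ContDiff ℝ (⊤ : ℕ∞) (fderiv ℝ G) := hG.fderiv_right (by simp)
  have hd : ∀ q, HasFDerivAt G (fderiv ℝ G q) q := fun q =>
    (hG.differentiable (by simp) q).hasFDerivAt
  have hd2 : DifferentiableAt ℝ (fderiv ℝ G) z := hG1.differentiable (by simp) z
  have sym := second_derivative_symmetric hd hd2.hasFDerivAt v w
  have ev : ∀ a : E4, fderiv ℝ (fun q => fderiv ℝ G q a) z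
      = (fderiv ℝ (fderiv ℝ G) z).flip a := by
    intro a
    rw [fderiv_clm_apply hd2 (differentiableAt_const a)]
    simp
  rw [ev v, ev w]
  simp only [ContinuousLinearMap.flip_apply]
  exact sym.symm

lemma sliceY {G : E4 → ℝ} (hG : Differentiable ℝ G) (x v p t : ℝ) :
    HasDerivAt (fun s => G (x, s, v, p)) (fderiv ℝ G (x, t, v, p) (0, 1, 0, 0)) t :=
  (hG _).hasFDerivAt.comp_hasDerivAt t
    ((hasDerivAt_const t x).prodMk ((hasDerivAt_id t).prodMk
      ((hasDerivAt_const t v).prodMk (hasDerivAt_const t p))))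

lemma sliceU {G : E4 → ℝ} (hG : Differentiable ℝ G) (x y p t : ℝ) :
    HasDerivAt (fun s => G (x, y, s, p)) (fderiv ℝ G (x, y, t, p) (0, 0, 1, 0)) t :=
  (hG _).hasFDerivAt.comp_hasDerivAt t
    ((hasDerivAt_const t x).prodMk ((hasDerivAt_const t y).prodMk
      ((hasDerivAt_id t).prodMk (hasDerivAt_const t p))))

lemma sliceP {G : E4 → ℝ} (hG : Differentiable ℝ G) (x y v t : ℝ) :
    HasDerivAt (fun s => G (x, y, v, s)) (fderiv ℝ G (x, y, v, t) (0, 0, 0, 1)) t :=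
  (hG _).hasFDerivAt.comp_hasDerivAt t
    ((hasDerivAt_const t x).prodMk ((hasDerivAt_const t y).prodMk
      ((hasDerivAt_const t v).prodMk (hasDerivAt_id t))))

lemma slice2X {G : ℝ × ℝ → ℝ} (hG : Differentiable ℝ G) (y t : ℝ) :
    HasDerivAt (fun s => G (s, y)) (fderiv ℝ G (t, y) (1, 0)) t :=
  (hG _).hasFDerivAt.comp_hasDerivAt t ((hasDerivAt_id t).prodMk (hasDerivAt_const t y))

lemma slice2Y {G : ℝ × ℝ → ℝ} (hG : Differentiable ℝ G) (x t : ℝ) :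
    HasDerivAt (fun s => G (x, s)) (fderiv ℝ G (x, t) (0, 1)) t :=
  (hG _).hasFDerivAt.comp_hasDerivAt t ((hasDerivAt_const t x).prodMk (hasDerivAt_id t))

end Stmt9Aux

open Stmt9Aux

/-- if h(x,y,u,u_x) with h_p ≠ 0 is independent of y along a smooth
function u, then u solves u_xy = F⁰ + F¹·u_y with F⁰ = −h_y/h_p, F¹ = −h_u/h_p, and
these coefficients satisfy F¹_y + F⁰F¹_p = F⁰_u + F¹F⁰_p. -/
theorem stmt_9
    (h : ℝ → ℝ → ℝ → ℝ → ℝ)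
    (hh : ContDiff ℝ (⊤ : ℕ∞) (fun z : ℝ × ℝ × ℝ × ℝ => h z.1 z.2.1 z.2.2.1 z.2.2.2))
    (hhp : ∀ x y v p, deriv (h x y v) p ≠ 0)
    (u : ℝ → ℝ → ℝ) (hu : ContDiff ℝ (⊤ : ℕ∞) (fun z : ℝ × ℝ => u z.1 z.2))
    (hconst : ∀ x y,
      deriv (fun y' => h x y' (u x y') (deriv (fun x' => u x' y') x)) y = 0)
    (F0 F1 : ℝ → ℝ → ℝ → ℝ → ℝ)
    (hF0 : ∀ x y v p, F0 x y v p
      = -deriv (fun y' => h x y' v p) y / deriv (h x y v) p)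
    (hF1 : ∀ x y v p, F1 x y v p
      = -deriv (fun v' => h x y v' p) v / deriv (h x y v) p) :
    (∀ x y,
      deriv (fun y' => deriv (fun x' => u x' y') x) y
        = F0 x y (u x y) (deriv (fun x' => u x' y) x)
          + F1 x y (u x y) (deriv (fun x' => u x' y) x) * deriv (fun y' => u x y') y) ∧
    (∀ x y v p,
      deriv (fun y' => F1 x y' v p) y + F0 x y v p * deriv (F1 x y v) p
        = deriv (fun v' => F0 x y v' p) v + F1 x y v p * deriv (F0 x y v) p) := by
  set H : E4 → ℝ := fun z => h z.1 z.2.1 z.2.2.1 z.2.2.2 with hHdef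
  have hHd : Differentiable ℝ H := hh.differentiable (by simp)
  -- first partials of H as functions
  set A : E4 → ℝ := fun q => fderiv ℝ H q (0, 1, 0, 0) with hAdef
  set B : E4 → ℝ := fun q => fderiv ℝ H q (0, 0, 1, 0) with hBdef
  set C : E4 → ℝ := fun q => fderiv ℝ H q (0, 0, 0, 1) with hCdef
  have hH1 : ContDiff ℝ (⊤ : ℕ∞) (fderiv ℝ H) := hh.fderiv_right (by simp)
  have hA : ContDiff ℝ (⊤ : ℕ∞) A := hH1.clm_apply contDiff_const
  have hB : ContDiff ℝ (⊤ : ℕ∞) B := hH1.clm_apply contDiff_const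
  have hC : ContDiff ℝ (⊤ : ℕ∞) C := hH1.clm_apply contDiff_const
  -- coordinate derivatives of h expressed via A, B, C
  have derivY : ∀ x y v p, deriv (fun y' => h x y' v p) y = A (x, y, v, p) :=
    fun x y v p => (sliceY hHd x v p y).deriv
  have derivU : ∀ x y v p, deriv (fun v' => h x y v' p) v = B (x, y, v, p) :=
    fun x y v p => (sliceU hHd x y p v).deriv
  have derivP : ∀ x y v p, deriv (h x y v) p = C (x, y, v, p) :=
    fun x y v p => (sliceP hHd x y v p).deriv
  have hC0 : ∀ x y v p, C (x, y, v, p) ≠ 0 := fun x y v p => by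
    rw [← derivP]; exact hhp x y v p
  constructor
  · -- Part 1
    intro x y
    set U : ℝ × ℝ → ℝ := fun z => u z.1 z.2 with hUdef
    have hUd : Differentiable ℝ U := hu.differentiable (by simp)
    set ux : ℝ × ℝ → ℝ := fun q => fderiv ℝ U q (1, 0) with huxdef
    have hux : ContDiff ℝ (⊤ : ℕ∞) ux := (hu.fderiv_right (by simp)).clm_apply contDiff_const
    have duxeq : ∀ x y, deriv (fun x' => u x' y) x = ux (x, y) :=
      fun x y => (slice2X hUd y x).deriv
    have huy : HasDerivAt (fun y' => u x y') (fderiv ℝ U (x, y) (0, 1)) y :=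
      slice2Y hUd x y
    have huxy : HasDerivAt (fun y' => ux (x, y')) (fderiv ℝ ux (x, y) (0, 1)) y :=
      slice2Y (hux.differentiable (by simp)) x y
    set uy := fderiv ℝ U (x, y) (0, 1) with huydef
    set w := fderiv ℝ ux (x, y) (0, 1) with hwdef
    set z : E4 := (x, y, u x y, ux (x, y)) with hzdef
    have hγ : HasDerivAt (fun y' => ((x, y', u x y', ux (x, y')) : E4))
        ((0, 1, uy, w) : E4) y :=
      (hasDerivAt_const y x).prodMk ((hasDerivAt_id y).prodMk (huy.prodMk huxy))
    have hφ : HasDerivAt (fun y' => H (x, y', u x y', ux (x, y')))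
        (fderiv ℝ H z (0, 1, uy, w)) y :=
      HasFDerivAt.comp_hasDerivAt (l := H) y (hHd z).hasFDerivAt hγ
    have hc := hconst x y
    have hfun : (fun y' => h x y' (u x y') (deriv (fun x' => u x' y') x))
        = fun y' => H (x, y', u x y', ux (x, y')) :=
      funext fun y' => by rw [duxeq]
    rw [hfun, hφ.deriv] at hc
    have hlin : fderiv ℝ H z (0, 1, uy, w) = A z + uy * B z + w * C z := by
      have hv : ((0, 1, uy, w) : E4)
          = (0, 1, 0, 0) + uy • ((0, 0, 1, 0) : E4) + w • ((0, 0, 0, 1) : E4) := by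
        simp [Prod.ext_iff]
      rw [hv, map_add, map_add, map_smul, map_smul, hAdef, hBdef, hCdef]
      simp [smul_eq_mul]
    rw [hlin] at hc
    have hgfun : (fun y' => deriv (fun x' => u x' y') x) = fun y' => ux (x, y') :=
      funext fun y' => duxeq x y'
    rw [hgfun, huxy.deriv, duxeq, hF0, hF1, derivY, derivP, derivU, huy.deriv]
    have hcz : C z ≠ 0 := hC0 x y (u x y) (ux (x, y))
    rw [hzdef] at hc hcz
    field_simp
    linear_combination hc
  · -- Part 2
    intro x y v p
    set z : E4 := (x, y, v, p) with hzdef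
    have hcz : C z ≠ 0 := hC0 x y v p
    have hAd := hA.differentiable (by simp)
    have hBd := hB.differentiable (by simp)
    have hCd := hC.differentiable (by simp)
    -- rewrite the four functions
    have e1 : (fun y' => F1 x y' v p) = fun y' => -B (x, y', v, p) / C (x, y', v, p) :=
      funext fun y' => by rw [hF1, derivU, derivP]
    have e2 : F1 x y v = fun p' => -B (x, y, v, p') / C (x, y, v, p') :=
      funext fun p' => by rw [hF1, derivU, derivP]
    have e3 : (fun v' => F0 x y v' p) = fun v' => -A (x, y, v', p) / C (x, y, v', p) :=
      funext fun v' => by rw [hF0, derivY, derivP]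
    have e4 : F0 x y v = fun p' => -A (x, y, v, p') / C (x, y, v, p') :=
      funext fun p' => by rw [hF0, derivY, derivP]
    -- derivatives via slices
    have dBy : HasDerivAt (fun y' => B (x, y', v, p)) (fderiv ℝ B z (0, 1, 0, 0)) y :=
      sliceY hBd x v p y
    have dCy : HasDerivAt (fun y' => C (x, y', v, p)) (fderiv ℝ C z (0, 1, 0, 0)) y :=
      sliceY hCd x v p y
    have dBp : HasDerivAt (fun p' => B (x, y, v, p')) (fderiv ℝ B z (0, 0, 0, 1)) p :=
      sliceP hBd x y v p
    have dCp : HasDerivAt (fun p' => C (x, y, v, p')) (fderiv ℝ C z (0, 0, 0, 1)) p :=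
      sliceP hCd x y v p
    have dAu : HasDerivAt (fun v' => A (x, y, v', p)) (fderiv ℝ A z (0, 0, 1, 0)) v :=
      sliceU hAd x y p v
    have dCu : HasDerivAt (fun v' => C (x, y, v', p)) (fderiv ℝ C z (0, 0, 1, 0)) v :=
      sliceU hCd x y p v
    have dAp : HasDerivAt (fun p' => A (x, y, v, p')) (fderiv ℝ A z (0, 0, 0, 1)) p :=
      sliceP hAd x y v p
    have hczy : C (x, y, v, p) ≠ 0 := hC0 x y v p
    have q1 := ((dBy.neg.div dCy hczy)).deriv
    have q2 := ((dBp.neg.div dCp hczy)).deriv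
    have q3 := ((dAu.neg.div dCu hczy)).deriv
    have q4 := ((dAp.neg.div dCp hczy)).deriv
    simp only [Pi.div_def, Pi.neg_apply] at q1 q2 q3 q4
    rw [e1, e2, e3, e4, q1, q2, q3, q4]
    -- symmetry of mixed partials
    have s1 : fderiv ℝ B z (0, 1, 0, 0) = fderiv ℝ A z (0, 0, 1, 0) := by
      rw [hAdef, hBdef]; exact mixed_symm hh z _ _
    have s2 : fderiv ℝ C z (0, 1, 0, 0) = fderiv ℝ A z (0, 0, 0, 1) := by
      rw [hAdef, hCdef]; exact mixed_symm hh z _ _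
    have s3 : fderiv ℝ C z (0, 0, 1, 0) = fderiv ℝ B z (0, 0, 0, 1) := by
      rw [hBdef, hCdef]; exact mixed_symm hh z _ _
    rw [s1, s2, s3]
    beta_reduce
    have hzq : (x, y, v, p) = z := hzdef.symm
    rw [hzq]  -- make all points z
    set a := A z
    set b := B z
    set c := C z
    set m1 := fderiv ℝ A z (0, 0, 1, 0)
    set m2 := fderiv ℝ A z (0, 0, 0, 1)
    set m3 := fderiv ℝ B z (0, 0, 0, 1)
    set m4 := fderiv ℝ C z (0, 0, 0, 1)
    field_simp
    ring
end
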